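/- Let Z be a RF on a complete non-atomic probability space satisfying (★), let Z̃ ∈ C[Z], and let Θ̃ be the associated local RF under the tilted measure P̂. Then P̂(S(Θ̃) > 0) = 1, i.e., E[‖Z̃(0)‖^α · 1{∫_T ‖Θ̃(t)‖^α λ(dt) = 0}] = 0. -/

import Mathlib

/-! If `Z̃(0) ≠ 0` and `S(Z̃) = 0`, the path vanishes a.e., hence on `T₀ + u` for a.e. shift `u`.
For a fixed `u`, however, `f ↦ ‖f(0)‖^α 1{f = 0 on T₀ + u}` is `α`-homogeneous, so the identity
defining `C[Z]` equates its expectation under `Z̃` with that under `B^u Z̃`, which is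
`E[‖Z̃(-u)‖^α 1{Z̃ = 0 on T₀}] = 0` by (★). Exchanging the order of `∀ᵐ u` and `∀ᵐ ω` shows
that `{Z̃(0) ≠ 0, S(Z̃) = 0}` is `P`-null; on `{Z̃(0) ≠ 0}` the events `S(Θ̃) = 0` and
`S(Z̃) = 0` coincide. -/

open MeasureTheory ProbabilityTheory Filter
open scoped ENNReal Topology

noncomputable section

abbrev Tsp (l : ℕ) : Type := EuclideanSpace ℝ (Fin l)
abbrev Vsp (d : ℕ) : Type := EuclideanSpace ℝ (Fin d)
abbrev RPath (l d : ℕ) : Type := Tsp l → Vsp d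

/-- The shift `B^h f = f(· − h)`. -/
def shift {l d : ℕ} (h : Tsp l) (f : RPath l d) : RPath l d := fun t => f (t - h)

/-- Joint measurability of a random field. -/
def JointlyMeasurable {Ω : Type*} [MeasurableSpace Ω] {l d : ℕ} (Z : Ω → RPath l d) : Prop :=
  Measurable fun p : Ω × Tsp l => Z p.1 p.2

/-- `F ∈ H_β`: product-measurable and `β`-homogeneous maps on path space. -/
def Hom (l d : ℕ) (β : ℝ) (F : RPath l d → ℝ≥0∞) : Prop :=
  Measurable F ∧
  ∀ c : ℝ, 0 < c → ∀ f : RPath l d,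
    F (fun t => c • f t) = ENNReal.ofReal (c ^ β) * F f

/-- Condition (★). -/
def StarC {Ω : Type*} [MeasurableSpace Ω] (P : Measure Ω) {l d : ℕ} (α : ℝ)
    (Z : Ω → RPath l d) : Prop :=
  JointlyMeasurable Z ∧
  (∫⁻ ω, ENNReal.ofReal (‖Z ω 0‖ ^ α) ∂P) = 1 ∧
  ∃ T₀ : Set (Tsp l), T₀.Countable ∧ P {ω | ∃ t ∈ T₀, 0 < ‖Z ω t‖} = 1

/-- `Z̃ ∈ C[Z]`. -/
def MemC {Ω Ω' : Type*} [MeasurableSpace Ω] [MeasurableSpace Ω']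
    (P : Measure Ω) (P' : Measure Ω') {l d : ℕ} (α : ℝ)
    (Z : Ω → RPath l d) (ZT : Ω' → RPath l d) : Prop :=
  StarC P' α ZT ∧
  ∀ F : RPath l d → ℝ≥0∞, Hom l d α F → ∀ h : Tsp l,
    (∫⁻ ω, F (Z ω) ∂P) = ∫⁻ ω', F (shift h (ZT ω')) ∂P'

/-- `S_γ(f) = ∫ ‖f(t)‖^α γ(t) dt`. -/
def Sgam {l d : ℕ} (α : ℝ) (γ : Tsp l → ℝ) (f : RPath l d) : ℝ≥0∞ :=
  ∫⁻ t, ENNReal.ofReal (‖f t‖ ^ α * γ t)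

/-- `S(f) = ∫ ‖f(t)‖^α dt`. -/
def Sfun {l d : ℕ} (α : ℝ) (f : RPath l d) : ℝ≥0∞ :=
  ∫⁻ t, ENNReal.ofReal (‖f t‖ ^ α)

/-- The local random field `Z̃/‖Z̃(0)‖` (set to `0` where `‖Z̃(0)‖ = 0`). -/
def localRF {Ω : Type*} {l d : ℕ} (ZT : Ω → RPath l d) (ω : Ω) : RPath l d :=
  fun t => if ‖ZT ω 0‖ = 0 then 0 else ‖ZT ω 0‖⁻¹ • ZT ω t

/-- The tilted measure `P̂`. -/
def tilted {Ω : Type*} [MeasurableSpace Ω] (P : Measure Ω) {l d : ℕ} (α : ℝ)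
    (ZT : Ω → RPath l d) : Measure Ω :=
  P.withDensity fun ω => ENNReal.ofReal (‖ZT ω 0‖ ^ α)

section

variable {l d : ℕ}

@[simp]
lemma shift_zero (f : RPath l d) : shift 0 f = f := by
  funext t
  simp [shift]

lemma Sfun_smul {α c : ℝ} (hc : 0 < c) (f : RPath l d) :
    Sfun α (c • f) = ENNReal.ofReal (c ^ α) * Sfun α f := by
  rw [Sfun, Sfun, ← lintegral_const_mul' _ _ ENNReal.ofReal_ne_top]
  refine lintegral_congr fun t => ?_
  rw [Pi.smul_apply, norm_smul, Real.norm_of_nonneg hc.le, Real.mul_rpow hc.le (norm_nonneg _),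
    ENNReal.ofReal_mul (Real.rpow_nonneg hc.le _)]

lemma Sfun_smul_eq_zero_iff {α c : ℝ} (hc : 0 < c) (f : RPath l d) :
    Sfun α (c • f) = 0 ↔ Sfun α f = 0 := by
  simp [Sfun_smul hc, Real.rpow_pos_of_pos hc]

lemma Sfun_localRF_eq_zero_iff {Ω : Type*} {ZT : Ω → RPath l d} {ω : Ω} (h0 : ZT ω 0 ≠ 0)
    (α : ℝ) : Sfun α (localRF ZT ω) = 0 ↔ Sfun α (ZT ω) = 0 := by
  have hloc : localRF ZT ω = ‖ZT ω 0‖⁻¹ • ZT ω := by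
    funext t
    simp [localRF, h0]
  rw [hloc, Sfun_smul_eq_zero_iff (inv_pos.2 (norm_pos_iff.2 h0))]

lemma ae_eq_zero_of_Sfun_eq_zero {α : ℝ} {f : RPath l d} (hf : Measurable f)
    (hS : Sfun α f = 0) : ∀ᵐ s, f s = 0 := by
  have hfS : Measurable fun s => ENNReal.ofReal (‖f s‖ ^ α) :=
    (hf.norm.pow_const α).ennreal_ofReal
  filter_upwards [(lintegral_eq_zero_iff hfS).1 hS] with s hs
  by_contra hne
  simp only [Pi.zero_apply, ENNReal.ofReal_eq_zero] at hs
  exact hs.not_gt (Real.rpow_pos_of_pos (norm_pos_iff.2 hne) α)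

lemma ae_forall_add_eq_zero_of_Sfun_eq_zero {α : ℝ} {f : RPath l d} (hf : Measurable f)
    {T₀ : Set (Tsp l)} (hT₀ : T₀.Countable) (hS : Sfun α f = 0) :
    ∀ᵐ u, ∀ t ∈ T₀, f (t + u) = 0 :=
  (ae_ball_iff hT₀).2 fun t _ =>
    (measurePreserving_add_left volume t).quasiMeasurePreserving.ae
      (ae_eq_zero_of_Sfun_eq_zero hf hS)

lemma hom_ofReal_norm_rpow_mul_indicator {α : ℝ} {C : Set (RPath l d)} (hC : MeasurableSet C)
    (hcone : ∀ c : ℝ, 0 < c → ∀ f, c • f ∈ C ↔ f ∈ C) :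
    Hom l d α fun f => ENNReal.ofReal (‖f 0‖ ^ α) * C.indicator 1 f := by
  refine ⟨?_, fun c hc f => ?_⟩
  · exact ((measurable_pi_apply 0).norm.pow_const α).ennreal_ofReal.mul
      (measurable_one.indicator hC)
  · have hind : C.indicator (1 : RPath l d → ℝ≥0∞) (c • f) = C.indicator 1 f := by
      by_cases hf : f ∈ C <;> simp [hf, hcone c hc f]
    change ENNReal.ofReal (‖c • f 0‖ ^ α) * C.indicator 1 (c • f) = _
    simp only [hind, norm_smul, Real.norm_of_nonneg hc.le,
      Real.mul_rpow hc.le (norm_nonneg _), ENNReal.ofReal_mul (Real.rpow_nonneg hc.le _), mul_assoc]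

lemma measurableSet_forall_add_eq_zero {T₀ : Set (Tsp l)} (hT₀ : T₀.Countable) (u : Tsp l) :
    MeasurableSet {f : RPath l d | ∀ t ∈ T₀, f (t + u) = 0} := by
  rw [show {f : RPath l d | ∀ t ∈ T₀, f (t + u) = 0} = ⋂ t ∈ T₀, {f | f (t + u) = 0} by ext; simp]
  exact .biInter hT₀ fun t _ => measurable_pi_apply (t + u) (measurableSet_singleton 0)

section

variable {Ω Ω' : Type*} [MeasurableSpace Ω] [MeasurableSpace Ω']
  {P : Measure Ω} {P' : Measure Ω'} {α : ℝ} {Z : Ω → RPath l d} {ZT : Ω' → RPath l d}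

lemma JointlyMeasurable.measurable (hZ : JointlyMeasurable Z) : Measurable Z :=
  measurable_pi_lambda _ fun _ => hZ.comp (measurable_id.prodMk measurable_const)

lemma JointlyMeasurable.measurable_path (hZ : JointlyMeasurable Z) (ω : Ω) : Measurable (Z ω) :=
  hZ.comp (measurable_const.prodMk measurable_id)

lemma StarC.exists_countable_ae_exists_ne_zero [IsProbabilityMeasure P] (hZ : StarC P α Z) :
    ∃ T₀ : Set (Tsp l), T₀.Countable ∧ ∀ᵐ ω ∂P, ∃ t ∈ T₀, Z ω t ≠ 0 := by
  obtain ⟨hZm, -, T₀, hT₀, hprob⟩ := hZ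
  refine ⟨T₀, hT₀, ?_⟩
  have hmeas : MeasurableSet {ω | ∃ t ∈ T₀, 0 < ‖Z ω t‖} := by
    convert ((measurableSet_forall_add_eq_zero hT₀ 0).preimage
      hZm.measurable).compl using 1
    ext ω
    simp [norm_pos_iff]
  filter_upwards [(mem_ae_iff_prob_eq_one hmeas).2 hprob] with ω ⟨t, ht, hpos⟩
  exact ⟨t, ht, norm_pos_iff.1 hpos⟩

lemma MemC.lintegral_comp_shift (hZT : MemC P P' α Z ZT) {F : RPath l d → ℝ≥0∞}
    (hF : Hom l d α F) (h : Tsp l) :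
    ∫⁻ ω, F (shift h (ZT ω)) ∂P' = ∫⁻ ω, F (ZT ω) ∂P' := by
  simpa using (hZT.2 F hF h).symm.trans (hZT.2 F hF 0)

lemma MemC.ae_eq_zero_or_exists_add_ne_zero (hZT : MemC P P' α Z ZT) {T₀ : Set (Tsp l)}
    (hT₀ : T₀.Countable) (hne : ∀ᵐ ω ∂P', ∃ t ∈ T₀, ZT ω t ≠ 0) (u : Tsp l) :
    ∀ᵐ ω ∂P', ZT ω 0 = 0 ∨ ∃ t ∈ T₀, ZT ω (t + u) ≠ 0 := by
  set C := {f : RPath l d | ∀ t ∈ T₀, f (t + u) = 0}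
  set F : RPath l d → ℝ≥0∞ := fun f => ENNReal.ofReal (‖f 0‖ ^ α) * C.indicator 1 f
  have hF : Hom l d α F := hom_ofReal_norm_rpow_mul_indicator
    (measurableSet_forall_add_eq_zero hT₀ u) fun c hc f => by simp [C, hc.ne']
  have hshift : ∫⁻ ω, F (shift u (ZT ω)) ∂P' = 0 := by
    refine (lintegral_congr_ae ?_).trans lintegral_zero
    filter_upwards [hne] with ω ⟨t, ht, h⟩
    have : shift u (ZT ω) ∉ C := fun hC => h (by simpa [shift] using hC t ht)
    simp [F, this]
  rw [hZT.lintegral_comp_shift hF u] at hshift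
  filter_upwards [(lintegral_eq_zero_iff (hF.1.comp hZT.1.1.measurable)).1 hshift] with ω hω
  rcases mul_eq_zero.1 hω with h | h
  · left
    by_contra h0
    exact (ENNReal.ofReal_pos.2 (Real.rpow_pos_of_pos (norm_pos_iff.2 h0) α)).ne' h
  · right
    simpa [C] using h

lemma MemC.ae_Sfun_ne_zero [IsProbabilityMeasure P'] (hZT : MemC P P' α Z ZT) :
    ∀ᵐ ω ∂P', ZT ω 0 ≠ 0 → Sfun α (ZT ω) ≠ 0 := by
  obtain ⟨T₀, hT₀, hne⟩ := hZT.1.exists_countable_ae_exists_ne_zero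
  have hmeas : MeasurableSet
      {p : Tsp l × Ω' | ZT p.2 0 = 0 ∨ ∃ t ∈ T₀, ZT p.2 (t + p.1) ≠ 0} := by
    have hpath : Measurable fun p : Tsp l × Ω' => fun s => ZT p.2 (s + p.1) :=
      measurable_pi_lambda _ fun s =>
        hZT.1.1.comp (measurable_snd.prodMk (measurable_fst.const_add s))
    rw [Set.ofPred_or]
    refine .union (measurableSet_eq_fun
      ((measurable_pi_apply 0).comp (hZT.1.1.measurable.comp measurable_snd)) measurable_const) ?_
    convert ((measurableSet_forall_add_eq_zero hT₀ 0).preimage hpath).compl using 1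
    ext p
    simp
  have hswap : ∀ᵐ ω ∂P', ∀ᵐ u, ZT ω 0 = 0 ∨ ∃ t ∈ T₀, ZT ω (t + u) ≠ 0 :=
    (Measure.ae_ae_comm hmeas).1 (ae_of_all _ (hZT.ae_eq_zero_or_exists_add_ne_zero hT₀ hne))
  filter_upwards [hswap] with ω hω h0 hS
  obtain ⟨u, hu, hu'⟩ := (hω.and (ae_forall_add_eq_zero_of_Sfun_eq_zero
    (hZT.1.1.measurable_path ω) hT₀ hS)).exists
  rcases hu with h | ⟨t, ht, hne⟩
  exacts [h0 h, hne (hu' t ht)]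

end

end

theorem stmt2_general {Ω : Type*} [MeasurableSpace Ω] (P : Measure Ω)
    [IsProbabilityMeasure P]
    {l d : ℕ} (α : ℝ) (hα : 0 < α)
    (Z : Ω → RPath l d)
    (ZT : Ω → RPath l d) (hZT : MemC P P α Z ZT) :
    (∫⁻ ω, ENNReal.ofReal (‖ZT ω 0‖ ^ α) *
        (if Sfun α (localRF ZT ω) = 0 then 1 else 0) ∂P) = 0 := by
  refine (lintegral_congr_ae ?_).trans lintegral_zero
  filter_upwards [hZT.ae_Sfun_ne_zero] with ω hω
  by_cases h0 : ZT ω 0 = 0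
  · simp [h0, Real.zero_rpow hα.ne']
  · simp [Sfun_localRF_eq_zero_iff h0, hω h0]

/-- the local RF `Θ̃` satisfies `P̂(S(Θ̃) > 0) = 1`, i.e.
`E[‖Z̃(0)‖^α 1{S(Θ̃) = 0}] = 0`. -/
theorem stmt2 {Ω : Type*} [MeasurableSpace Ω] (P : Measure Ω)
    [IsProbabilityMeasure P] (hPc : P.IsComplete) [NullSingletonClass P]
    {l d : ℕ} (hl : 1 ≤ l) (hd : 1 ≤ d) (α : ℝ) (hα : 0 < α)
    (Z : Ω → RPath l d) (hZ : StarC P α Z)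
    (ZT : Ω → RPath l d) (hZT : MemC P P α Z ZT) :
    (∫⁻ ω, ENNReal.ofReal (‖ZT ω 0‖ ^ α) *
        (if Sfun α (localRF ZT ω) = 0 then 1 else 0) ∂P) = 0 :=
  stmt2_general P α hα Z ZT hZT
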